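/- For s > 2, digits c_1,…,c_{n-1} ∈ {1,…,s-1}, and any p with 1 ≤ p ≤ s-2, one has inf Δ'_{c_1…c_{n-1}p} > sup Δ'_{c_1…c_{n-1}[p+1]}; equivalently, (s^{s-1}−1)(p(s−1)^2 − s) + s(s−1)^2 > 0 and the difference of the two endpoint formulas equals ((s^{s-1}−1)(p(s−1)^2−s) + s(s−1)^2) / ((s−1)(s^{s-1}−1)s^{c_1+⋯+c_{n-1}+p+1}). -/

import Mathlib

open Finset

/-- The term of the series: `c n / s ^ (c 1 + ... + c (n+1))` (0-indexed). -/
noncomputable def sTerm (s : ℕ) (c : ℕ → ℕ) (n : ℕ) : ℝ :=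
  (c n : ℝ) / (s : ℝ) ^ (∑ k ∈ Finset.range (n + 1), c k)

/-- `x = Σ_{k=1}^∞ c_k / s^{c_1+⋯+c_k}`. -/
noncomputable def sVal (s : ℕ) (c : ℕ → ℕ) : ℝ := ∑' n : ℕ, sTerm s c n

/-- The sequence `(c_k)` has all terms in `{1, ..., s-1}`. -/
def sValid (s : ℕ) (c : ℕ → ℕ) : Prop := ∀ k, 1 ≤ c k ∧ c k ≤ s - 1

/-- The set `S_{(s,0)}`. -/
def Sset (s : ℕ) : Set ℝ := { x | ∃ c : ℕ → ℕ, sValid s c ∧ x = sVal s c }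

/-- The cylinder `Δ'_{c_1 ... c_n}` of rank `n` with base the first `n` terms of `c`. -/
def cyl (s n : ℕ) (c : ℕ → ℕ) : Set ℝ :=
  { x | ∃ c' : ℕ → ℕ, sValid s c' ∧ (∀ k < n, c' k = c k) ∧ x = sVal s c' }

/-- The cylinder `Δ'_{c_1 ... c_n p}`: prefix of length `n` from `c`, next digit `p`. -/
def cylExt (s n : ℕ) (c : ℕ → ℕ) (p : ℕ) : Set ℝ :=
  { x | ∃ c' : ℕ → ℕ, sValid s c' ∧ (∀ k < n, c' k = c k) ∧ c' n = p ∧ x = sVal s c' }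

/-- `g_n = Σ_{k=1}^n c_k / s^{c_1+⋯+c_k}`. -/
noncomputable def gPart (s n : ℕ) (c : ℕ → ℕ) : ℝ := ∑ k ∈ Finset.range n, sTerm s c k

/-!
Splitting off the first `m + 1` digits shows that the cylinder `Δ'_{c_1…c_m q}` is the image of
the whole set `S` of sums under the increasing affine map `x ↦ g + (q + x) / s ^ (C + q)`.
On `S`, the digit bounds `(s - 1)(s^d - 1) ≤ d (s^(s-1) - 1)` and `d (s - 1) ≤ s^d - 1` compare
each term `d_k / s^(S_(k+1))` (`S_k` the partial digit sums) with the telescoping difference `K / s^(S_k) - K / s^(S_(k+1))`,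
so `(s - 1) / (s^(s-1) - 1) ≤ x ≤ 1 / (s - 1)`, with equality for the constant digit sequences
`s - 1` and `1` (geometric series). The endpoints of the cylinders, and hence their gap, follow.
-/

open Filter Topology

section

lemma natCast_mul_pow_sub_one_le {r : ℝ} (hr : 1 ≤ r) {d e : ℕ} (hde : d ≤ e) :
    (e : ℝ) * (r ^ d - 1) ≤ d * (r ^ e - 1) := by
  induction e, hde using Nat.le_induction with
  | base => rfl
  | succ e hde ih =>
    have hsum : ∑ i ∈ range d, r ^ i ≤ d * r ^ e := by
      simpa using sum_le_card_nsmul (range d) (r ^ ·) (r ^ e)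
        fun i hi ↦ pow_le_pow_right₀ hr ((mem_range.mp hi).le.trans hde)
    have hgeom : r ^ d - 1 ≤ d * r ^ e * (r - 1) := by
      rw [← geom_sum_mul]
      exact mul_le_mul_of_nonneg_right hsum (by linarith)
    push_cast
    rw [pow_succ]
    linarith

lemma natCast_le_pow_sub_one_div {r : ℝ} (hr : 1 < r) (d : ℕ) :
    (d : ℝ) ≤ 1 / (r - 1) * (r ^ d - 1) := by
  have := one_add_mul_le_pow (a := r - 1) (by linarith) d
  rw [add_sub_cancel] at this
  rw [one_div_mul_eq_div, le_div_iff₀ (by linarith)]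
  linarith

variable {s : ℕ} {c : ℕ → ℕ}

lemma pow_pred_sub_one_pos (hs : 1 < s) : (0 : ℝ) < (s : ℝ) ^ (s - 1) - 1 :=
  sub_pos.mpr (one_lt_pow₀ (by exact_mod_cast hs) (by omega))

lemma sTerm_nonneg (s : ℕ) (c : ℕ → ℕ) (n : ℕ) : 0 ≤ sTerm s c n := by
  unfold sTerm; positivity

lemma sub_div_pow_sum_range_succ (hs : 0 < s) (K : ℝ) (k : ℕ) :
    K / (s : ℝ) ^ (∑ j ∈ range k, c j) - K / (s : ℝ) ^ (∑ j ∈ range (k + 1), c j) =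
      K * ((s : ℝ) ^ c k - 1) / (s : ℝ) ^ (∑ j ∈ range (k + 1), c j) := by
  have : (s : ℝ) ≠ 0 := by positivity
  rw [sum_range_succ, pow_add]
  field_simp

lemma sum_range_sTerm_le (hs : 0 < s) {K : ℝ} (hK : ∀ k, (c k : ℝ) ≤ K * ((s : ℝ) ^ c k - 1))
    (N : ℕ) : ∑ k ∈ range N, sTerm s c k ≤ K - K / (s : ℝ) ^ (∑ j ∈ range N, c j) := by
  calc ∑ k ∈ range N, sTerm s c k
      ≤ ∑ k ∈ range N, (K / (s : ℝ) ^ (∑ j ∈ range k, c j) -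
          K / (s : ℝ) ^ (∑ j ∈ range (k + 1), c j)) := by
        gcongr with k
        rw [sub_div_pow_sum_range_succ hs, sTerm]
        gcongr
        exact hK k
    _ = K - K / (s : ℝ) ^ (∑ j ∈ range N, c j) := by
        rw [sum_range_sub']
        simp

lemma le_sum_range_sTerm (hs : 0 < s) {K : ℝ} (hK : ∀ k, K * ((s : ℝ) ^ c k - 1) ≤ c k)
    (N : ℕ) : K - K / (s : ℝ) ^ (∑ j ∈ range N, c j) ≤ ∑ k ∈ range N, sTerm s c k := by
  calc K - K / (s : ℝ) ^ (∑ j ∈ range N, c j)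
      = ∑ k ∈ range N, (K / (s : ℝ) ^ (∑ j ∈ range k, c j) -
          K / (s : ℝ) ^ (∑ j ∈ range (k + 1), c j)) := by
        rw [sum_range_sub']
        simp
    _ ≤ ∑ k ∈ range N, sTerm s c k := by
        gcongr with k
        rw [sub_div_pow_sum_range_succ hs, sTerm]
        gcongr
        exact hK k

lemma sum_range_sTerm_le_one_div_sub_one (hs : 1 < s) (c : ℕ → ℕ) (N : ℕ) :
    ∑ k ∈ range N, sTerm s c k ≤ 1 / ((s : ℝ) - 1) := by
  have hs' : (1 : ℝ) < s := by exact_mod_cast hs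
  have : (0 : ℝ) < 1 / ((s : ℝ) - 1) := one_div_pos.mpr (by linarith)
  exact (sum_range_sTerm_le (by omega) (fun k ↦ natCast_le_pow_sub_one_div hs' (c k)) N).trans
    (sub_le_self _ (by positivity))

lemma summable_sTerm (hs : 1 < s) (c : ℕ → ℕ) : Summable (sTerm s c) :=
  summable_of_sum_range_le (sTerm_nonneg s c) (sum_range_sTerm_le_one_div_sub_one hs c)

lemma sVal_le_one_div_sub_one (hs : 1 < s) (c : ℕ → ℕ) : sVal s c ≤ 1 / ((s : ℝ) - 1) :=
  (summable_sTerm hs c).tsum_le_of_sum_range_le (sum_range_sTerm_le_one_div_sub_one hs c)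

lemma tendsto_div_pow_sum_range (hs : 1 < s) (hc : ∀ k, 1 ≤ c k) (K : ℝ) :
    Tendsto (fun N ↦ K / (s : ℝ) ^ (∑ j ∈ range N, c j)) atTop (𝓝 0) := by
  have hs' : (1 : ℝ) < s := by exact_mod_cast hs
  have hN : ∀ N, N ≤ ∑ j ∈ range N, c j := fun N ↦ by
    simpa using card_nsmul_le_sum (range N) c 1 fun k _ ↦ hc k
  refine tendsto_const_nhds.div_atTop ?_
  exact (tendsto_pow_atTop_atTop_of_one_lt hs').comp
    (tendsto_atTop_mono hN tendsto_id)

lemma le_sVal (hs : 1 < s) (hc : ∀ k, 1 ≤ c k) {K : ℝ}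
    (hK : ∀ k, K * ((s : ℝ) ^ c k - 1) ≤ c k) : K ≤ sVal s c := by
  have hlim := (tendsto_const_nhds (x := K)).sub (tendsto_div_pow_sum_range hs hc K)
  rw [sub_zero] at hlim
  exact le_of_tendsto_of_tendsto' hlim (summable_sTerm hs c).hasSum.tendsto_sum_nat
    (le_sum_range_sTerm (by omega) hK)

lemma sVal_const (hs : 1 < s) {d : ℕ} (hd : 0 < d) :
    sVal s (fun _ ↦ d) = d / ((s : ℝ) ^ d - 1) := by
  have hx : 1 < (s : ℝ) ^ d := one_lt_pow₀ (by exact_mod_cast hs) hd.ne'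
  have hterm : ∀ n, sTerm s (fun _ ↦ d) n = d / (s : ℝ) ^ d * ((s : ℝ) ^ d)⁻¹ ^ n := fun n ↦ by
    simp only [sTerm, sum_const, card_range, smul_eq_mul, pow_mul', pow_succ, inv_pow]
    field_simp
  simp only [sVal, hterm, tsum_mul_left]
  rw [tsum_geometric_of_lt_one (by positivity) (inv_lt_one_of_one_lt₀ hx)]
  field_simp

lemma isGreatest_Sset (hs : 1 < s) : IsGreatest (Sset s) (1 / ((s : ℝ) - 1)) := by
  refine ⟨⟨fun _ ↦ 1, fun _ ↦ ⟨le_rfl, Nat.le_sub_one_of_lt hs⟩, ?_⟩, ?_⟩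
  · simp [sVal_const hs one_pos]
  · rintro _ ⟨c, -, rfl⟩
    exact sVal_le_one_div_sub_one hs c

lemma isLeast_Sset (hs : 1 < s) :
    IsLeast (Sset s) (((s : ℝ) - 1) / ((s : ℝ) ^ (s - 1) - 1)) := by
  have hs' : (1 : ℝ) < s := by exact_mod_cast hs
  have hcast : ((s - 1 : ℕ) : ℝ) = s - 1 := by rw [Nat.cast_sub hs.le, Nat.cast_one]
  refine ⟨⟨fun _ ↦ s - 1, fun _ ↦ ⟨Nat.le_sub_one_of_lt hs, le_rfl⟩, ?_⟩, ?_⟩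
  · rw [sVal_const hs (by omega), hcast]
  · rintro _ ⟨c, hc, rfl⟩
    refine le_sVal hs (fun k ↦ (hc k).1) fun k ↦ ?_
    rw [div_mul_eq_mul_div, div_le_iff₀ (pow_pred_sub_one_pos hs), ← hcast]
    exact natCast_mul_pow_sub_one_le hs'.le (hc k).2

lemma sVal_eq_gPart_add (hs : 1 < s) (c : ℕ → ℕ) (n : ℕ) :
    sVal s c = gPart s n c + sVal s (fun k ↦ c (n + k)) / (s : ℝ) ^ (∑ k ∈ range n, c k) := by
  have hshift : ∀ k, sTerm s c (k + n) =
      sTerm s (fun k ↦ c (n + k)) k / (s : ℝ) ^ (∑ k ∈ range n, c k) := fun k ↦ by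
    rw [sTerm, sTerm, show k + n + 1 = n + (k + 1) by ring, sum_range_add, pow_add, add_comm k n,
      div_div, mul_comm]
  rw [sVal, sVal, ← (summable_sTerm hs c).sum_add_tsum_nat_add n, gPart]
  simp only [hshift, tsum_div_const]

lemma sVal_eq_of_prefix (hs : 1 < s) {m q : ℕ} {c' : ℕ → ℕ} (hpre : ∀ k < m, c' k = c k)
    (hq : c' m = q) :
    sVal s c' = gPart s m c +
      (q + sVal s (fun k ↦ c' (m + 1 + k))) / (s : ℝ) ^ (∑ k ∈ range m, c k + q) := by
  have hsum : ∀ n ≤ m, ∑ k ∈ range n, c' k = ∑ k ∈ range n, c k := fun n hn ↦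
    sum_congr rfl fun k hk ↦ hpre k ((mem_range.mp hk).trans_le hn)
  have hsum' : ∑ k ∈ range (m + 1), c' k = ∑ k ∈ range m, c k + q := by
    rw [sum_range_succ, hsum m le_rfl, hq]
  have hgPart : gPart s m c' = gPart s m c := sum_congr rfl fun k hk ↦ by
    have hk := mem_range.mp hk
    rw [sTerm, sTerm, hpre k hk, hsum (k + 1) hk]
  rw [sVal_eq_gPart_add hs c' (m + 1), gPart, sum_range_succ, ← gPart, hgPart, sTerm, hq, hsum',
    add_div, add_assoc]

lemma cylExt_eq_image (hs : 1 < s) {m q : ℕ} (hc : ∀ k < m, 1 ≤ c k ∧ c k ≤ s - 1)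
    (hq : 1 ≤ q) (hqs : q ≤ s - 1) :
    cylExt s m c q =
      (fun x ↦ gPart s m c + (q + x) / (s : ℝ) ^ (∑ k ∈ range m, c k + q)) '' Sset s := by
  ext x
  constructor
  · rintro ⟨c', hc', hpre, hq', rfl⟩
    exact ⟨_, ⟨_, fun k ↦ hc' (m + 1 + k), rfl⟩, (sVal_eq_of_prefix hs hpre hq').symm⟩
  · rintro ⟨_, ⟨d, hd, rfl⟩, rfl⟩
    set c' : ℕ → ℕ := fun k ↦ if k < m then c k else if k = m then q else d (k - (m + 1))
    have hc' : sValid s c' := fun k ↦ by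
      simp only [c']
      split_ifs with h₁ h₂
      exacts [hc k h₁, ⟨hq, hqs⟩, hd _]
    have htail : (fun k ↦ c' (m + 1 + k)) = d := funext fun k ↦ by
      simp [c', show ¬ m + 1 + k < m by omega, show m + 1 + k ≠ m by omega]
    have hcm : c' m = q := by simp [c']
    refine ⟨c', hc', fun k hk ↦ if_pos hk, hcm, ?_⟩
    rw [sVal_eq_of_prefix (c' := c') hs (fun k hk ↦ if_pos hk) hcm, htail]

lemma csInf_cylExt (hs : 1 < s) {m q : ℕ} (hc : ∀ k < m, 1 ≤ c k ∧ c k ≤ s - 1)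
    (hq : 1 ≤ q) (hqs : q ≤ s - 1) :
    sInf (cylExt s m c q) = gPart s m c +
      (q + ((s : ℝ) - 1) / ((s : ℝ) ^ (s - 1) - 1)) / (s : ℝ) ^ (∑ k ∈ range m, c k + q) := by
  rw [cylExt_eq_image hs hc hq hqs]
  exact (Monotone.map_isLeast (fun x y hxy ↦ by gcongr) (isLeast_Sset hs)).csInf_eq

lemma csSup_cylExt (hs : 1 < s) {m q : ℕ} (hc : ∀ k < m, 1 ≤ c k ∧ c k ≤ s - 1)
    (hq : 1 ≤ q) (hqs : q ≤ s - 1) :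
    sSup (cylExt s m c q) = gPart s m c +
      (q + 1 / ((s : ℝ) - 1)) / (s : ℝ) ^ (∑ k ∈ range m, c k + q) := by
  rw [cylExt_eq_image hs hc hq hqs]
  exact (Monotone.map_isGreatest (fun x y hxy ↦ by gcongr) (isGreatest_Sset hs)).csSup_eq

end

theorem stmt7 (s m : ℕ) (hs : 2 < s) (c : ℕ → ℕ) (hc : ∀ k < m, 1 ≤ c k ∧ c k ≤ s - 1)
    (p : ℕ) (hp : 1 ≤ p) (hps : p ≤ s - 2) :
    sSup (cylExt s m c (p + 1)) < sInf (cylExt s m c p) ∧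
      sInf (cylExt s m c p) - sSup (cylExt s m c (p + 1)) =
        (((s : ℝ) ^ (s - 1) - 1) * ((p : ℝ) * ((s : ℝ) - 1) ^ 2 - s) + (s : ℝ) * ((s : ℝ) - 1) ^ 2) /
          (((s : ℝ) - 1) * ((s : ℝ) ^ (s - 1) - 1) *
            (s : ℝ) ^ ((∑ k ∈ Finset.range m, c k) + p + 1)) ∧
      0 < ((s : ℝ) ^ (s - 1) - 1) * ((p : ℝ) * ((s : ℝ) - 1) ^ 2 - s) + (s : ℝ) * ((s : ℝ) - 1) ^ 2 := by
  have hs' : (3 : ℝ) ≤ s := by exact_mod_cast hs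
  have hp' : (1 : ℝ) ≤ p := by exact_mod_cast hp
  have hpow := pow_pred_sub_one_pos (by omega : 1 < s)
  have hnum : 0 < ((s : ℝ) ^ (s - 1) - 1) * ((p : ℝ) * ((s : ℝ) - 1) ^ 2 - s) +
      (s : ℝ) * ((s : ℝ) - 1) ^ 2 := by
    have : 0 < (p : ℝ) * ((s : ℝ) - 1) ^ 2 - s := by nlinarith
    positivity
  have hdiff : sInf (cylExt s m c p) - sSup (cylExt s m c (p + 1)) =
      (((s : ℝ) ^ (s - 1) - 1) * ((p : ℝ) * ((s : ℝ) - 1) ^ 2 - s) + (s : ℝ) * ((s : ℝ) - 1) ^ 2) /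
        (((s : ℝ) - 1) * ((s : ℝ) ^ (s - 1) - 1) *
          (s : ℝ) ^ ((∑ k ∈ Finset.range m, c k) + p + 1)) := by
    rw [csInf_cylExt (by omega) hc hp (by omega), csSup_cylExt (by omega) hc (by omega) (by omega),
      ← add_assoc, pow_succ]
    have : (s : ℝ) - 1 ≠ 0 := by linarith
    field_simp
    push_cast
    ring
  refine ⟨sub_pos.mp (hdiff ▸ ?_), hdiff, hnum⟩
  have : (0 : ℝ) < s - 1 := by linarith
  positivity
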